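/- arXiv:1703.00172 — 2 statements merged into one kernel-verified Lean document; each statement's English description precedes it below -/
import Mathlib

section
/- Let ψ(t) = (((h⁻¹)')⁻¹((α/(βC))/(t + k₀)))^{1/β}, where h⁻¹ is C², increasing, strictly convex on (0, r₀] with (h⁻¹)'(s) ≤ α·s·(h⁻¹)''(s). Then ψ'(t) ≥ -(α/β)·ψ(t)/(t + k₀) for all t ≥ 0. -/
/-!
Write `ψ = (G ∘ u) ^ (1 / β)` with `u t = (α / (β C)) / (t + k₀)` and `s = G (u t)`. Convexity
makes `(h⁻¹)'` monotone, so its left inverse `G` is monotone and continuous from the left at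
`u t`, and the inverse function rule gives `G` the left derivative `1 / (h⁻¹)''(s)` there.
As `u` is decreasing, `ψ` then has a right derivative at `t`, and the hypothesis
`(h⁻¹)'(s) ≤ α s (h⁻¹)''(s)` bounds it below by `-(α / β) ψ(t) / (t + k₀)`. Where `ψ` is not
differentiable `deriv` returns `0`, which satisfies the (nonpositive) bound as well.
-/

open Real Set Filter Topology

theorem HasDerivWithinAt.of_local_left_inverse {𝕜 : Type*} [NontriviallyNormedField 𝕜]
    {f g : 𝕜 → 𝕜} {f' a : 𝕜} {s : Set 𝕜} (hg : ContinuousWithinAt g s a)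
    (hf : HasDerivAt f f' (g a)) (hf' : f' ≠ 0) (ha : a ∈ s)
    (hfg : ∀ᶠ y in 𝓝[s] a, f (g y) = y) : HasDerivWithinAt g f'⁻¹ s a :=
  (hf.hasFDerivAt_equiv hf').hasFDerivWithinAt.of_local_left_inverse (t := univ)
    (by simpa only [nhdsWithin_univ] using hg.tendsto) ha hfg

theorem ConvexOn.monotoneOn_deriv_of_differentiableAt {S : Set ℝ} {f : ℝ → ℝ}
    (hf : ConvexOn ℝ S f) : MonotoneOn (deriv f) {x ∈ S | DifferentiableAt ℝ f x} := by
  rintro x ⟨hxS, hxd⟩ y ⟨hyS, hyd⟩ hxy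
  rcases hxy.eq_or_lt with rfl | hlt
  · rfl
  · exact (hf.deriv_le_slope hxS hyS hlt hxd).trans (hf.slope_le_deriv hxS hyS hlt hyd)

theorem StrictMonoOn.of_leftInvOn {α β : Type*} [Preorder α] [LinearOrder β]
    {F : β → α} {G : α → β} {T : Set α} (hF : MonotoneOn F (G '' T)) (hFG : LeftInvOn F G T) :
    StrictMonoOn G T := by
  intro x hx y hy hxy
  refine lt_of_not_ge fun hle => hxy.not_ge ?_
  simpa only [hFG hx, hFG hy] using hF (mem_image_of_mem G hy) (mem_image_of_mem G hx) hle

theorem ConvexOn.hasDerivWithinAt_of_leftInvOn_deriv {f G : ℝ → ℝ} {S : Set ℝ} {s m : ℝ}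
    (hf : ConvexOn ℝ S f) (hs : s ∈ S) (hS : S ∈ 𝓝[<] s) (hG : LeftInvOn G (deriv f) S)
    (hpos : 0 < deriv f s) (hsurj : Ioc 0 (deriv f s) ⊆ deriv f '' S)
    (hm : HasDerivAt (deriv f) m s) (hm₀ : m ≠ 0) :
    HasDerivWithinAt G m⁻¹ (Ioc 0 (deriv f s)) (deriv f s) := by
  set a := deriv f s
  have hGa : G a = s := hG hs
  have hGT : ∀ x ∈ Ioc 0 a, G x ∈ S ∧ deriv f (G x) = x := by
    rintro x hx
    obtain ⟨y, hy, rfl⟩ := hsurj hx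
    rw [hG hy]
    exact ⟨hy, rfl⟩
  have hFmono := hf.monotoneOn_deriv_of_differentiableAt
  have hGmono : StrictMonoOn G (Ioc 0 a) := by
    refine StrictMonoOn.of_leftInvOn (hFmono.mono ?_) fun x hx => (hGT x hx).2
    rintro _ ⟨x, hx, rfl⟩
    refine ⟨(hGT x hx).1, differentiableAt_of_deriv_ne_zero ?_⟩
    rw [(hGT x hx).2]
    exact hx.1.ne'
  have hcont : ContinuousWithinAt G (Ioc 0 a) a := by
    refine (hGmono.continuousWithinAt_left_of_exists_between (Ioc_mem_nhdsLE hpos) ?_).mono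
      Ioc_subset_Iic_self
    intro b hb
    rw [hGa] at hb
    have hev : ∀ᶠ y in 𝓝[<] s, y ∈ S ∧ 0 < deriv f y ∧ b < y ∧ y < s :=
      (show ∀ᶠ y in 𝓝[<] s, y ∈ S from hS).and <|
        (eventually_nhdsWithin_of_eventually_nhds
          (hm.continuousAt.eventually (lt_mem_nhds hpos))).and (Ioo_mem_nhdsLT hb)
    obtain ⟨y, hyS, hy₀, hby, hys⟩ := hev.exists
    have hFy : deriv f y ≤ a :=
      hFmono ⟨hyS, differentiableAt_of_deriv_ne_zero hy₀.ne'⟩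
        ⟨hs, differentiableAt_of_deriv_ne_zero hpos.ne'⟩ hys.le
    exact ⟨deriv f y, ⟨hy₀, hFy⟩, by rw [hG hyS, hGa]; exact ⟨hby.le, hys⟩⟩
  refine HasDerivWithinAt.of_local_left_inverse hcont (hGa ▸ hm) hm₀ ⟨hpos, le_rfl⟩ ?_
  filter_upwards [self_mem_nhdsWithin] with x hx using (hGT x hx).2

theorem image_const_div_add_const_Ici {c k t : ℝ} (hc : 0 < c) (ht : 0 < t + k) :
    (fun x => c / (x + k)) '' Ici t = Ioc 0 (c / (t + k)) := by
  ext y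
  constructor
  · rintro ⟨x, hx, rfl⟩
    have hx : t ≤ x := hx
    exact ⟨div_pos hc (by linarith), div_le_div_of_nonneg_left hc.le ht (by linarith)⟩
  · rintro ⟨hy₀, hy⟩
    have : t + k ≤ c / y := by rwa [le_div_iff₀ hy₀, ← le_div_iff₀' ht]
    refine ⟨c / y - k, show t ≤ c / y - k by linarith, ?_⟩
    simp only [sub_add_cancel]
    field_simp

theorem hasDerivAt_const_div_add_const (c : ℝ) {k t : ℝ} (ht : t + k ≠ 0) :
    HasDerivAt (fun x => c / (x + k)) (-(c / (t + k) / (t + k))) t :=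
  ((hasDerivAt_const t c).div ((hasDerivAt_id t).add_const k) ht).congr_deriv <| by
    simp only [id]
    field_simp
    ring

theorem le_deriv_of_hasDerivWithinAt_Ici {f : ℝ → ℝ} {f' B x : ℝ}
    (hf : HasDerivWithinAt f f' (Ici x) x) (hB : B ≤ f') (hB₀ : B ≤ 0) : B ≤ deriv f x := by
  by_cases hd : DifferentiableAt ℝ f x
  · rwa [← hd.derivWithin (uniqueDiffOn_Ici x x self_mem_Ici),
      hf.derivWithin (uniqueDiffOn_Ici x x self_mem_Ici)]
  · rwa [deriv_zero_of_not_differentiableAt hd]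

theorem le_deriv_rpow_of_hasDerivWithinAt_Ici {g : ℝ → ℝ} {g' L p x : ℝ}
    (hg : HasDerivWithinAt g g' (Ici x) x) (hgx : 0 < g x) (hp : 0 < p) (hL : 0 ≤ L)
    (hg' : -L * g x ≤ g') : -(p * L) * g x ^ p ≤ deriv (fun y => g y ^ p) x := by
  have hpow := (hasDerivAt_rpow_const (p := p) (Or.inl hgx.ne')).comp_hasDerivWithinAt x hg
  refine le_deriv_of_hasDerivWithinAt_Ici hpow ?_ (by rw [neg_mul, neg_nonpos]; positivity)
  calc -(p * L) * g x ^ p = p * g x ^ (p - 1) * (-L * g x) := by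
        rw [rpow_sub_one hgx.ne']
        field_simp
    _ ≤ p * g x ^ (p - 1) * g' := by gcongr

theorem stmt_1_general
    (hinv G : ℝ → ℝ) (r₀ α C β k₀ : ℝ)
    (hα : 0 < α) (hC : 0 < C) (hβ : 1 ≤ β)
    (hk₀ : 0 < k₀)
    (hconv : StrictConvexOn ℝ (Ioc 0 r₀) hinv)
    (hineq : ∀ s ∈ Ioc 0 r₀, deriv hinv s ≤ α * s * deriv (deriv hinv) s)
    -- G is the inverse function of (h⁻¹)'
    (hGleft : ∀ s ∈ Ioc 0 r₀, G (deriv hinv s) = s)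
    -- the argument lies in the range of (h⁻¹)'
    (hrange : ∀ t ≥ (0:ℝ), α / (β * C) / (t + k₀) ∈ deriv hinv '' Ioc 0 r₀) :
    ∀ t ≥ 0,
      deriv (fun t => (G (α / (β * C) / (t + k₀))) ^ (1 / β)) t ≥
        -(α / β) * (G (α / (β * C) / (t + k₀))) ^ (1 / β) / (t + k₀) := by
  intro t ht
  have htk : 0 < t + k₀ := by linarith
  set c := α / (β * C)
  have hc : 0 < c := by positivity
  set a := c / (t + k₀)
  have ha : 0 < a := div_pos hc htk
  obtain ⟨s, hs, hFs⟩ := hrange t ht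
  replace hFs : deriv hinv s = a := hFs
  have hGa : G a = s := hFs ▸ hGleft s hs
  set m := deriv (deriv hinv) s
  have hineq_s : a ≤ α * s * m := hFs ▸ hineq s hs
  have hm : 0 < m := pos_of_mul_pos_right (ha.trans_le hineq_s) (by positivity [hs.1])
  have hu_image := image_const_div_add_const_Ici hc htk
  have hsurj : Ioc 0 (deriv hinv s) ⊆ deriv hinv '' Ioc 0 r₀ := by
    rw [hFs, ← hu_image, image_subset_iff]
    exact fun x hx => hrange x (ht.trans hx)
  have hG : HasDerivWithinAt G m⁻¹ (Ioc 0 a) a := hFs ▸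
    hconv.convexOn.hasDerivWithinAt_of_leftInvOn_deriv hs
      (mem_of_superset (Ioc_mem_nhdsLT hs.1) (Ioc_subset_Ioc_right hs.2)) hGleft
      (hFs ▸ ha) hsurj (differentiableAt_of_deriv_ne_zero hm.ne').hasDerivAt hm.ne'
  have hGu := hG.comp t (hasDerivAt_const_div_add_const c htk.ne').hasDerivWithinAt
    (hu_image ▸ mapsTo_image _ _)
  have hbound : -(α / (t + k₀)) * G a ≤ m⁻¹ * -(a / (t + k₀)) := by
    have hkey : m⁻¹ * a ≤ α * s := by
      rw [inv_mul_le_iff₀ hm]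
      linarith
    calc -(α / (t + k₀)) * G a = -(α * s / (t + k₀)) := by rw [hGa]; ring
      _ ≤ -(m⁻¹ * a / (t + k₀)) := neg_le_neg (div_le_div_of_nonneg_right hkey htk.le)
      _ = m⁻¹ * -(a / (t + k₀)) := by ring
  have hψ := le_deriv_rpow_of_hasDerivWithinAt_Ici (p := 1 / β) hGu
    (show 0 < G a from hGa ▸ hs.1) (by positivity) (by positivity) hbound
  calc -(α / β) * G a ^ (1 / β) / (t + k₀) = -(1 / β * (α / (t + k₀))) * G a ^ (1 / β) := by ring
    _ ≤ _ := hψ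

/-- Derivative lower bound ψ'(t) ≥ -(α/β)·ψ(t)/(t+k₀) for
ψ(t) = (((h⁻¹)')⁻¹((α/(βC))/(t+k₀)))^{1/β}. -/
theorem stmt_1
    (hinv G : ℝ → ℝ) (r₀ α C β k₀ : ℝ)
    (hr₀ : 0 < r₀) (hr₀1 : r₀ ≤ 1) (hα : 0 < α) (hC : 0 < C) (hβ : 1 ≤ β)
    (hk₀ : 0 < k₀)
    (hsmooth : ContDiffOn ℝ 2 hinv (Ioc 0 r₀))
    (hmono : StrictMonoOn hinv (Ioc 0 r₀))
    (hconv : StrictConvexOn ℝ (Ioc 0 r₀) hinv)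
    (hineq : ∀ s ∈ Ioc 0 r₀, deriv hinv s ≤ α * s * deriv (deriv hinv) s)
    -- G is the inverse function of (h⁻¹)'
    (hGleft : ∀ s ∈ Ioc 0 r₀, G (deriv hinv s) = s)
    (hGright : ∀ x ∈ deriv hinv '' Ioc 0 r₀, deriv hinv (G x) = x)
    -- the argument lies in the range of (h⁻¹)'
    (hrange : ∀ t ≥ (0:ℝ), α / (β * C) / (t + k₀) ∈ deriv hinv '' Ioc 0 r₀) :
    ∀ t ≥ 0,
      deriv (fun t => (G (α / (β * C) / (t + k₀))) ^ (1 / β)) t ≥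
        -(α / β) * (G (α / (β * C) / (t + k₀))) ^ (1 / β) / (t + k₀) :=
  stmt_1_general hinv G r₀ α C β k₀ hα hC hβ hk₀ hconv hineq hGleft hrange
end

section
/- Let φ solve φ' = (ε₀/(2C₁))·φ·(h⁻¹)'(1/φ^β) with 0 < φ(0)^{-β} ≤ r₀ and β > 1, where h⁻¹ is strictly convex C¹ on [0, r₀] with h⁻¹(0) = (h⁻¹)'(0) = 0 and h⁻¹ ≥ 0, and φ(t) → ∞. Then (ε₀/(2C₁))·∫₀^∞ φ(s)·H*( (2C₁ φ'(s))/(ε₀ φ(s)) ) ds ≤ φ(0)^{1−β}/(β − 1), where H* is the convex conjugate of H (H = h⁻¹ on ℝ₊, +∞ on ℝ₋). -/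
open Real Set Filter MeasureTheory Topology

/-!
Since `φ' = F(φ)` is autonomous and `φ → ∞`, at the last visit of any level `ℓ ≥ φ 0` the
solution leaves upwards, so `F(ℓ) ≥ 0`; hence `φ` is nondecreasing, and (after excluding
`φ 0 ≤ 0`) `x = φ^{-β}` stays in `(0, r₀]`. There the convex conjugate obeys
`H*(h'(x)) = x h'(x) - h(x) ≤ x h'(x)`, and the ODE turns `φ · H*(2C₁φ'/(ε₀φ))` into at most
`(2C₁/ε₀) φ' φ^{-β}`, whose integral is `φ(0)^{1-β}/(β-1)`.
-/

lemma HasDerivAt.nonneg_of_eventually_le_right {f : ℝ → ℝ} {f' a : ℝ} (hf : HasDerivAt f f' a)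
    (h : ∀ᶠ x in 𝓝[>] a, f a ≤ f x) : 0 ≤ f' := by
  refine ge_of_tendsto ((hasDerivAt_iff_tendsto_slope.1 hf).mono_left (nhdsGT_le_nhdsNE a)) ?_
  filter_upwards [h, self_mem_nhdsWithin] with x hfx hax
  rw [slope_def_field]
  exact div_nonneg (sub_nonneg.2 hfx) (sub_nonneg.2 (le_of_lt hax))

lemma ConvexOn.deriv_mul_sub_le {f : ℝ → ℝ} {s : Set ℝ} (hf : ConvexOn ℝ s f) {x y : ℝ}
    (hx : x ∈ s) (hy : y ∈ s) (hfx : DifferentiableAt ℝ f x) :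
    deriv f x * (y - x) ≤ f y - f x := by
  rcases lt_trichotomy x y with hxy | rfl | hyx
  · have := hf.deriv_le_slope hx hy hxy hfx
    rwa [slope_def_field, le_div_iff₀ (sub_pos.2 hxy)] at this
  · simp
  · have := hf.slope_le_deriv hy hx hyx hfx
    rw [slope_def_field, div_le_iff₀ (sub_pos.2 hyx)] at this
    linarith

section AutonomousODE

variable {φ F : ℝ → ℝ} {t₀ : ℝ}

lemma exists_last_visit_of_tendsto_atTop (hφ : ContinuousOn φ (Ici t₀))
    (htend : Tendsto φ atTop atTop) {ℓ : ℝ} (hℓ : φ t₀ ≤ ℓ) :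
    ∃ u ≥ t₀, φ u = ℓ ∧ ∀ r > u, ℓ < φ r := by
  set S := Ici t₀ ∩ φ ⁻¹' Iic ℓ
  obtain ⟨N, hN⟩ := (htend.eventually_gt_atTop ℓ).exists_forall_of_atTop
  have hSbdd : BddAbove S :=
    ⟨N, fun r hr => not_lt.1 fun hNr => (hN r hNr.le).not_ge hr.2⟩
  have hu : sSup S ∈ S := (hφ.preimage_isClosed_of_isClosed isClosed_Ici isClosed_Iic).csSup_mem
    ⟨t₀, self_mem_Ici, hℓ⟩ hSbdd
  have hlater : ∀ r > sSup S, ℓ < φ r := fun r hr =>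
    not_le.1 fun hφr => (le_csSup hSbdd ⟨hu.1.trans hr.le, hφr⟩).not_gt hr
  refine ⟨sSup S, hu.1, le_antisymm hu.2 ?_, hlater⟩
  have hcont : ContinuousWithinAt φ (Ioi (sSup S)) (sSup S) :=
    (hφ _ hu.1).mono (Ioi_subset_Ici hu.1)
  exact ge_of_tendsto hcont (eventually_nhdsWithin_of_forall fun r hr => (hlater r hr).le)

lemma autonomous_rhs_nonneg_of_tendsto_atTop (hODE : ∀ t ≥ t₀, HasDerivAt φ (F (φ t)) t)
    (htend : Tendsto φ atTop atTop) {ℓ : ℝ} (hℓ : φ t₀ ≤ ℓ) : 0 ≤ F ℓ := by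
  obtain ⟨u, hu, hφu, hlater⟩ := exists_last_visit_of_tendsto_atTop
    (fun t ht => (hODE t ht).continuousAt.continuousWithinAt) htend hℓ
  have hleave := (hODE u hu).nonneg_of_eventually_le_right
    (eventually_nhdsWithin_of_forall fun r hr => hφu ▸ (hlater r hr).le)
  rwa [hφu] at hleave

lemma autonomous_monotoneOn_of_tendsto_atTop (hODE : ∀ t ≥ t₀, HasDerivAt φ (F (φ t)) t)
    (htend : Tendsto φ atTop atTop) : MonotoneOn φ (Ici t₀) := by
  refine monotoneOn_of_hasDerivWithinAt_nonneg (convex_Ici t₀)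
    (fun t ht => (hODE t ht).continuousAt.continuousWithinAt)
    (fun t ht => (hODE t (interior_subset ht)).hasDerivWithinAt) fun t ht => ?_
  exact autonomous_rhs_nonneg_of_tendsto_atTop (t₀ := t)
    (fun s hs => hODE s ((mem_Ici.1 (interior_subset ht)).trans hs)) htend le_rfl

lemma autonomous_exists_rhs_ne_zero_of_tendsto_atTop
    (hODE : ∀ t ≥ t₀, HasDerivAt φ (F (φ t)) t) (htend : Tendsto φ atTop atTop) {m : ℝ}
    (hm : φ t₀ < m) : ∃ ℓ ∈ Icc (φ t₀) m, F ℓ ≠ 0 := by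
  by_contra! hF
  have hcont : ContinuousOn φ (Ici t₀) := fun t ht => (hODE t ht).continuousAt.continuousWithinAt
  have hmono := autonomous_monotoneOn_of_tendsto_atTop hODE htend
  obtain ⟨T, hT, hφT, -⟩ := exists_last_visit_of_tendsto_atTop hcont htend hm.le
  have hconst := constant_of_has_deriv_right_zero (hcont.mono Icc_subset_Ici_self)
    (fun t ht => ?_) T ⟨hT, le_rfl⟩
  · exact hm.ne (hφT ▸ hconst).symm
  · have hdt := hODE t ht.1
    rw [hF (φ t) ⟨hmono self_mem_Ici ht.1 ht.1, hφT ▸ hmono ht.1 hT ht.2.le⟩] at hdt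
    exact hdt.hasDerivWithinAt

end AutonomousODE

/-- The convex conjugate of the function equal to `h` on `s` and to `+∞` off `s`. -/
noncomputable def conjugateOn (h : ℝ → ℝ) (s : Set ℝ) (p : ℝ) : ℝ :=
  sSup ((fun y => p * y - h y) '' s)

lemma conjugateOn_nonneg {h : ℝ → ℝ} {s : Set ℝ} (hs : IsCompact s) (hh : ContinuousOn h s)
    (h0s : 0 ∈ s) (h0 : h 0 = 0) (p : ℝ) : 0 ≤ conjugateOn h s p :=
  le_csSup (hs.image_of_continuousOn ((continuousOn_const.mul continuousOn_id).sub hh)).bddAbove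
    ⟨0, h0s, by simp [h0]⟩

lemma conjugateOn_deriv_le {h : ℝ → ℝ} {s : Set ℝ} (hconv : ConvexOn ℝ s h)
    (hnonneg : ∀ y ∈ s, 0 ≤ h y) {x : ℝ} (hx : x ∈ s) :
    conjugateOn h s (deriv h x) ≤ deriv h x * x := by
  refine csSup_le ((nonempty_of_mem hx).image _) ?_
  rintro _ ⟨y, hy, rfl⟩
  by_cases hd : DifferentiableAt ℝ h x
  · linarith [hconv.deriv_mul_sub_le hx hy hd, hnonneg x hx]
  · rw [deriv_zero_of_not_differentiableAt hd]
    linarith [hnonneg y hy]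

lemma mul_conjugateOn_div_le {h : ℝ → ℝ} {s : Set ℝ} (hconv : ConvexOn ℝ s h)
    (hnonneg : ∀ y ∈ s, 0 ≤ h y) {c y x d : ℝ} (hc : c ≠ 0) (hy : 0 < y) (hx : x ∈ s)
    (hd : d = c * y * deriv h x) :
    y * conjugateOn h s (d / (c * y)) ≤ c⁻¹ * (d * x) := by
  subst hd
  calc y * conjugateOn h s (c * y * deriv h x / (c * y)) ≤ y * (deriv h x * x) := by
        rw [mul_div_cancel_left₀ _ (mul_ne_zero hc hy.ne')]
        exact mul_le_mul_of_nonneg_left (conjugateOn_deriv_le hconv hnonneg hx) hy.le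
    _ = c⁻¹ * (c * y * deriv h x * x) := by field_simp

lemma integral_Ioi_deriv_mul_rpow_neg {φ φ' : ℝ → ℝ} {a β : ℝ} (hβ : 1 < β)
    (hφ : ∀ t ≥ a, HasDerivAt φ (φ' t) t) (hpos : ∀ t ≥ a, 0 < φ t) (hφ' : ∀ t > a, 0 ≤ φ' t)
    (htend : Tendsto φ atTop atTop) :
    IntegrableOn (fun t => φ' t * φ t ^ (-β)) (Ioi a) ∧
      ∫ t in Ioi a, φ' t * φ t ^ (-β) = φ a ^ (1 - β) / (β - 1) := by
  have hprim : ∀ t ∈ Ici a,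
      HasDerivAt (fun r => φ r ^ (1 - β) / (1 - β)) (φ' t * φ t ^ (-β)) t := by
    intro t ht
    refine (((hasDerivAt_rpow_const (Or.inl (hpos t ht).ne')).comp t (hφ t ht)).div_const
      (1 - β)).congr_deriv ?_
    rw [show 1 - β - 1 = -β by ring]
    field_simp [show 1 - β ≠ 0 by linarith]
  have hnonneg : ∀ t ∈ Ioi a, 0 ≤ φ' t * φ t ^ (-β) := fun t ht =>
    mul_nonneg (hφ' t ht) (rpow_nonneg (hpos t (le_of_lt ht)).le _)
  have hlim : Tendsto (fun r => φ r ^ (1 - β) / (1 - β)) atTop (𝓝 0) := by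
    have := ((tendsto_rpow_neg_atTop (by linarith : 0 < β - 1)).comp htend).div_const (1 - β)
    simpa [neg_sub] using this
  refine ⟨integrableOn_Ioi_deriv_of_nonneg' hprim hnonneg hlim, ?_⟩
  rw [integral_Ioi_of_hasDerivAt_of_nonneg' hprim hnonneg hlim, zero_sub, ← div_neg, neg_sub]

lemma pos_of_rpow_neg_pos_of_tendsto_atTop {φ g : ℝ → ℝ} {c β : ℝ} (hc : 0 < c) (hβ : β ≠ 0)
    (hODE : ∀ t ≥ (0 : ℝ), HasDerivAt φ (c * φ t * g (1 / φ t ^ β)) t)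
    (htend : Tendsto φ atTop atTop) (hφ0 : 0 < φ 0 ^ (-β)) : 0 < φ 0 := by
  set F : ℝ → ℝ := fun y => c * y * g (1 / y ^ β)
  have hF : ∀ ℓ ≥ φ 0, 0 ≤ F ℓ := fun ℓ hℓ =>
    autonomous_rhs_nonneg_of_tendsto_atTop (F := F) hODE htend hℓ
  rcases lt_trichotomy (φ 0) 0 with hneg | hzero | hpos
  · exfalso
    -- for `x < 0`, `x ^ y = |x| ^ y * cos (y π)`
    have hcos : 0 < cos (β * π) := by
      rw [rpow_def_of_neg hneg, neg_mul, cos_neg] at hφ0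
      exact pos_of_mul_pos_right hφ0 (exp_pos _).le
    -- `F ≥ 0` at `ℓ < 0` and at the level `ℓ' > 0` with `ℓ' ^ β = ℓ ^ β` gives `g (1 / ℓ ^ β)` both signs
    have hFzero : ∀ ℓ ∈ Icc (φ 0) (φ 0 / 2), F ℓ = 0 := by
      intro ℓ hℓ
      have hℓneg : ℓ < 0 := by linarith [hℓ.2]
      have hpow : 0 < ℓ ^ β := by
        rw [rpow_def_of_neg hℓneg]
        exact mul_pos (exp_pos _) hcos
      have hℓ' : 0 < (ℓ ^ β) ^ β⁻¹ := rpow_pos_of_pos hpow _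
      have hFneg := hF ℓ hℓ.1
      have hFpos := hF _ (hneg.le.trans hℓ'.le)
      simp only [F, rpow_inv_rpow hpow.le hβ] at hFneg hFpos
      refine mul_eq_zero_of_right _ (le_antisymm ?_ ?_)
      · exact nonpos_of_mul_nonneg_right hFneg (mul_neg_of_pos_of_neg hc hℓneg)
      · exact nonneg_of_mul_nonneg_right hFpos (mul_pos hc hℓ')
    obtain ⟨ℓ, hℓ, hFℓ⟩ :=
      autonomous_exists_rhs_ne_zero_of_tendsto_atTop (F := F) hODE htend (by linarith : φ 0 < φ 0 / 2)
    exact hFℓ (hFzero ℓ hℓ)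
  · rw [hzero, zero_rpow (neg_ne_zero.2 hβ)] at hφ0
    exact absurd hφ0 (lt_irrefl 0)
  · exact hpos

theorem stmt_10_general
    (hinv φ : ℝ → ℝ) (r₀ ε₀ C₁ β : ℝ)
    (hr₀ : 0 < r₀) (hε₀ : 0 < ε₀) (hC₁ : 0 < C₁) (hβ : 1 < β)
    (hC1 : ContDiffOn ℝ 1 hinv (Icc 0 r₀))
    (hconv : StrictConvexOn ℝ (Icc 0 r₀) hinv)
    (h0 : hinv 0 = 0)
    (hnonneg : ∀ s ∈ Icc 0 r₀, 0 ≤ hinv s)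
    (hODE : ∀ t ≥ (0:ℝ),
      HasDerivAt φ (ε₀ / (2 * C₁) * φ t * deriv hinv (1 / φ t ^ β)) t)
    (hφ0 : 0 < (φ 0) ^ (-β)) (hφ0r : (φ 0) ^ (-β) ≤ r₀)
    (htend : Tendsto φ atTop atTop)
    -- H* : convex conjugate of H (H = h⁻¹ on [0,r₀], +∞ elsewhere)
    (Hstar : ℝ → ℝ)
    (hHstar : ∀ x, Hstar x = sSup ((fun y => x * y - hinv y) '' Icc 0 r₀)) :
    ε₀ / (2 * C₁) *
        ∫ s in Ioi (0:ℝ), φ s * Hstar (2 * C₁ * deriv φ s / (ε₀ * φ s)) ≤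
      (φ 0) ^ (1 - β) / (β - 1) := by
  obtain rfl : Hstar = conjugateOn hinv (Icc 0 r₀) := funext hHstar
  set c := ε₀ / (2 * C₁) with hc_def
  have hc : 0 < c := by positivity
  set F : ℝ → ℝ := fun y => c * y * deriv hinv (1 / y ^ β)
  have hφ0pos := pos_of_rpow_neg_pos_of_tendsto_atTop hc (by linarith) hODE htend hφ0
  have hmono := autonomous_monotoneOn_of_tendsto_atTop (F := F) hODE htend
  have hpos : ∀ t ≥ (0:ℝ), 0 < φ t := fun t ht => hφ0pos.trans_le (hmono self_mem_Ici ht ht)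
  have hmem : ∀ t ≥ (0:ℝ), φ t ^ (-β) ∈ Icc 0 r₀ := fun t ht =>
    ⟨(rpow_pos_of_pos (hpos t ht) _).le, (rpow_le_rpow_of_nonpos hφ0pos
      (hmono self_mem_Ici ht ht) (by linarith)).trans hφ0r⟩
  have hderiv : ∀ t ≥ (0:ℝ), deriv φ t = c * φ t * deriv hinv (φ t ^ (-β)) := fun t ht => by
    rw [(hODE t ht).deriv, rpow_neg (hpos t ht).le, one_div]
  have hbound : ∀ t ∈ Ioi (0:ℝ), φ t * conjugateOn hinv (Icc 0 r₀)
      (2 * C₁ * deriv φ t / (ε₀ * φ t)) ≤ c⁻¹ * (deriv φ t * φ t ^ (-β)) := fun t ht => by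
    rw [show 2 * C₁ * deriv φ t / (ε₀ * φ t) = deriv φ t / (c * φ t) by
      rw [hc_def]; field_simp]
    exact mul_conjugateOn_div_le hconv.convexOn hnonneg hc.ne' (hpos t (le_of_lt ht))
      (hmem t (le_of_lt ht)) (hderiv t (le_of_lt ht))
  obtain ⟨hint, hval⟩ := integral_Ioi_deriv_mul_rpow_neg hβ
    (fun t ht => (hODE t ht).differentiableAt.hasDerivAt) hpos
    (fun t ht => (hODE t ht.le).deriv ▸ autonomous_rhs_nonneg_of_tendsto_atTop (F := F) hODE htend
      (hmono self_mem_Ici ht.le ht.le)) htend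
  calc c * ∫ s in Ioi 0, φ s * conjugateOn hinv (Icc 0 r₀) (2 * C₁ * deriv φ s / (ε₀ * φ s))
      ≤ c * ∫ s in Ioi 0, c⁻¹ * (deriv φ s * φ s ^ (-β)) := by
        refine mul_le_mul_of_nonneg_left (setIntegral_mono_of_nonneg (fun t ht => ?_) hbound
          (hint.const_mul _)) hc.le
        exact mul_nonneg (hpos t (le_of_lt ht)).le
          (conjugateOn_nonneg isCompact_Icc hC1.continuousOn ⟨le_rfl, hr₀.le⟩ h0 _)
    _ = φ 0 ^ (1 - β) / (β - 1) := by
        rw [integral_const_mul, hval, ← mul_assoc, mul_inv_cancel₀ hc.ne', one_mul]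

/-- Weighted integral bound:
(ε₀/(2C₁))·∫₀^∞ φ(s)·H*((2C₁φ'(s))/(ε₀φ(s))) ds ≤ φ(0)^{1−β}/(β−1). -/
theorem stmt_10
    (hinv φ : ℝ → ℝ) (r₀ ε₀ C₁ β : ℝ)
    (hr₀ : 0 < r₀) (hε₀ : 0 < ε₀) (hC₁ : 0 < C₁) (hβ : 1 < β)
    (hC1 : ContDiffOn ℝ 1 hinv (Icc 0 r₀))
    (hconv : StrictConvexOn ℝ (Icc 0 r₀) hinv)
    (h0 : hinv 0 = 0) (hd0 : deriv hinv 0 = 0)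
    (hnonneg : ∀ s ∈ Icc 0 r₀, 0 ≤ hinv s)
    (hODE : ∀ t ≥ (0:ℝ),
      HasDerivAt φ (ε₀ / (2 * C₁) * φ t * deriv hinv (1 / φ t ^ β)) t)
    (hφ0 : 0 < (φ 0) ^ (-β)) (hφ0r : (φ 0) ^ (-β) ≤ r₀)
    (htend : Tendsto φ atTop atTop)
    -- H* : convex conjugate of H (H = h⁻¹ on [0,r₀], +∞ elsewhere)
    (Hstar : ℝ → ℝ)
    (hHstar : ∀ x, Hstar x = sSup ((fun y => x * y - hinv y) '' Icc 0 r₀)) :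
    ε₀ / (2 * C₁) *
        ∫ s in Ioi (0:ℝ), φ s * Hstar (2 * C₁ * deriv φ s / (ε₀ * φ s)) ≤
      (φ 0) ^ (1 - β) / (β - 1) :=
  stmt_10_general hinv φ r₀ ε₀ C₁ β hr₀ hε₀ hC₁ hβ hC1 hconv h0 hnonneg hODE hφ0 hφ0r htend Hstar
    hHstar
end
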